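/- arXiv:1806.06673 — 3 statements merged into one kernel-verified Lean document; each statement's English description precedes it below -/
import Mathlib

section
/- Let H1, H2, H3 be complex Hilbert spaces, let A : H1 → H2 and B : H2 → H3 be bounded linear operators, and let a, b be real numbers with a ≠ 0 such that A ∘ A* = a · (B* ∘ B) + b · id as operators on H2 (where * denotes the Hilbert-space adjoint). If ψ ∈ H1 satisfies A*Aψ = λ·ψ for some λ ∈ ℂ, then the vector ψ↑ := Aψ satisfies B*B(ψ↑) = ((λ − b)/a) · ψ↑. In particular, if Aψ ≠ 0 it is an eigenvector of B*B with eigenvalue (λ − b)/a. -/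
theorem LinearMap.apply_map_eq_smul_of_factorization {𝕜 M N : Type*} [Field 𝕜]
    [AddCommGroup M] [Module 𝕜 M] [AddCommGroup N] [Module 𝕜 N]
    {A : M →ₗ[𝕜] N} {A' : N → M} {T : N → N} {c d lam : 𝕜} (hc : c ≠ 0)
    (hfact : ∀ x, A (A' x) = c • T x + d • x) {ψ : M} (hψ : A' (A ψ) = lam • ψ) :
    T (A ψ) = ((lam - d) / c) • A ψ := by
  have h := hfact (A ψ)
  rw [hψ, map_smul] at h
  rw [div_eq_inv_mul, mul_smul, eq_inv_smul_iff₀ hc, sub_smul, h, add_sub_cancel_right]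

theorem statement_0
    {H1 H2 H3 : Type*}
    [NormedAddCommGroup H1] [InnerProductSpace ℂ H1] [CompleteSpace H1]
    [NormedAddCommGroup H2] [InnerProductSpace ℂ H2] [CompleteSpace H2]
    [NormedAddCommGroup H3] [InnerProductSpace ℂ H3] [CompleteSpace H3]
    (A : H1 →L[ℂ] H2) (B : H2 →L[ℂ] H3) (a b : ℝ) (ha : a ≠ 0)
    (hcomm : A ∘L ContinuousLinearMap.adjoint A =
      (a : ℂ) • (ContinuousLinearMap.adjoint B ∘L B) + (b : ℂ) • 1)
    (ψ : H1) (lam : ℂ)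
    (hψ : ContinuousLinearMap.adjoint A (A ψ) = lam • ψ) :
    ContinuousLinearMap.adjoint B (B (A ψ)) = ((lam - b) / a) • (A ψ) :=
  LinearMap.apply_map_eq_smul_of_factorization (A := (A : H1 →ₗ[ℂ] H2))
    (Complex.ofReal_ne_zero.mpr ha) (fun x => by
      simpa only [ContinuousLinearMap.coe_coe, ContinuousLinearMap.comp_apply, add_apply,
        smul_apply, one_apply_eq_self] using congr($hcomm x))
    hψ
end

section
/- Let (H_k)_{k ∈ ℕ} be a sequence of complex Hilbert spaces and A_k : H_k → H_{k+1} bounded linear operators, and let a_k, b_k be real numbers with a_k ≠ 0, such that for every k the relation A_k ∘ A_k* = a_k · (A_{k+1}* ∘ A_{k+1}) + b_k · id holds on H_{k+1}. Fix k < l and let ψ_l ∈ H_l satisfy A_l ψ_l = 0. Define eigenvalues recursively by λ_l := 0 and λ_j := a_j · λ_{j+1} + b_j for k ≤ j < l, and define ψ_l^k := A_k* A_{k+1}* ⋯ A_{l-1}* ψ_l ∈ H_k. Then A_k* A_k ψ_l^k = λ_k · ψ_l^k. -/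
/-! The factorization relation `A A* = a B* B + b` intertwines the two operators: if `φ` is an
eigenvector of `B* B` with eigenvalue `μ`, then `A* φ` is an eigenvector of `A* A` with eigenvalue
`a μ + b`. Starting from `ψ_l ∈ ker A_l` (eigenvalue `0`) and descending one level at a time gives
the claim. -/

open ContinuousLinearMap

section Factorization

variable {E F G : Type*}
  [NormedAddCommGroup E] [InnerProductSpace ℂ E] [CompleteSpace E]
  [NormedAddCommGroup F] [InnerProductSpace ℂ F] [CompleteSpace F]
  [NormedAddCommGroup G] [InnerProductSpace ℂ G] [CompleteSpace G]

theorem apply_adjoint_apply_eq_smul_of_comp_adjoint_eq (A : E →L[ℂ] F) (B : F →L[ℂ] G)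
    {a b μ : ℂ} (hAB : A ∘L adjoint A = a • (adjoint B ∘L B) + b • 1) {φ : F}
    (hφ : adjoint B (B φ) = μ • φ) :
    A (adjoint A φ) = (a * μ + b) • φ := by
  have h := congrArg (fun T => T φ) hAB
  simp only [comp_apply, add_apply, smul_apply, one_apply_eq_self] at h
  rw [h, hφ, smul_smul, add_smul]

theorem adjoint_apply_eigenvector_of_comp_adjoint_eq (A : E →L[ℂ] F) (B : F →L[ℂ] G)
    {a b μ : ℂ} (hAB : A ∘L adjoint A = a • (adjoint B ∘L B) + b • 1) {φ : F}
    (hφ : adjoint B (B φ) = μ • φ) :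
    adjoint A (A (adjoint A φ)) = (a * μ + b) • adjoint A φ := by
  rw [apply_adjoint_apply_eq_smul_of_comp_adjoint_eq A B hAB hφ, map_smul]

end Factorization

theorem statement_3_general
    (H : ℕ → Type*)
    [∀ k, NormedAddCommGroup (H k)] [∀ k, InnerProductSpace ℂ (H k)]
    [∀ k, CompleteSpace (H k)]
    (A : ∀ k, H k →L[ℂ] H (k + 1)) (a b : ℕ → ℝ)
    (hcomm : ∀ k, A k ∘L ContinuousLinearMap.adjoint (A k) =
      (a k : ℂ) • (ContinuousLinearMap.adjoint (A (k + 1)) ∘L A (k + 1)) + (b k : ℂ) • 1)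
    (k l : ℕ) (hkl : k < l)
    (lam : ℕ → ℂ) (hlaml : lam l = 0)
    (hlam : ∀ j, k ≤ j → j < l → lam j = (a j : ℂ) * lam (j + 1) + (b j : ℂ))
    (Ψ : ∀ j, H j) (hker : A l (Ψ l) = 0)
    (hΨ : ∀ j, k ≤ j → j < l → Ψ j = ContinuousLinearMap.adjoint (A j) (Ψ (j + 1))) :
    ContinuousLinearMap.adjoint (A k) (A k (Ψ k)) = lam k • Ψ k := by
  refine Nat.decreasingInduction
    (motive := fun j _ => k ≤ j → adjoint (A j) (A j (Ψ j)) = lam j • Ψ j)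
    (fun j hjl ih hkj => ?_) (fun _ => ?_) hkl.le le_rfl
  · rw [hΨ j hkj hjl, hlam j hkj hjl]
    exact adjoint_apply_eigenvector_of_comp_adjoint_eq (A j) (A (j + 1)) (hcomm j)
      (ih (Nat.le_succ_of_le hkj))
  · rw [hker, hlaml, map_zero, zero_smul]

/-- The chain construction of the factorization method: from an element `Ψ l` of the
kernel of `A l`, descending with the adjoints `ψ_l^k = A_k* ⋯ A_{l-1}* ψ_l`
(encoded by the sequence `Ψ` with `Ψ j = (A j)* (Ψ (j+1))`) produces an eigenvector of
`A_k* A_k` with eigenvalue given by the recursion `λ_l = 0`, `λ_j = a_j λ_{j+1} + b_j`. -/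
theorem statement_3
    (H : ℕ → Type*)
    [∀ k, NormedAddCommGroup (H k)] [∀ k, InnerProductSpace ℂ (H k)]
    [∀ k, CompleteSpace (H k)]
    (A : ∀ k, H k →L[ℂ] H (k + 1)) (a b : ℕ → ℝ) (ha : ∀ k, a k ≠ 0)
    (hcomm : ∀ k, A k ∘L ContinuousLinearMap.adjoint (A k) =
      (a k : ℂ) • (ContinuousLinearMap.adjoint (A (k + 1)) ∘L A (k + 1)) + (b k : ℂ) • 1)
    (k l : ℕ) (hkl : k < l)
    (lam : ℕ → ℂ) (hlaml : lam l = 0)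
    (hlam : ∀ j, k ≤ j → j < l → lam j = (a j : ℂ) * lam (j + 1) + (b j : ℂ))
    (Ψ : ∀ j, H j) (hker : A l (Ψ l) = 0)
    (hΨ : ∀ j, k ≤ j → j < l → Ψ j = ContinuousLinearMap.adjoint (A j) (Ψ (j + 1))) :
    ContinuousLinearMap.adjoint (A k) (A k (Ψ k)) = lam k • Ψ k :=
  statement_3_general H A a b hcomm k l hkl lam hlaml hlam Ψ hker hΨ
end

section
/- Let μ, ρ, η, η', B, g, h, h', φ, φ' : ℤ → ℝ and a, b ∈ ℝ with a ≠ 0 satisfy: μ(n) > 0, ρ(n) > 0, η(n) > 0, g(n) > 0 for all n; h'(n) ≠ 0 for all n; η(n)ρ(n) = B(n+1)ρ(n+1) for all n (the Pearson-type relation ρ^{next} = (Bρ)∘σ with ρ^{next} = ηρ); and η'(n) = η(n+1)·g(n+1) for all n (the relation η_{k+1} = (η_k g_k)∘σ). Set ρ'(n) := η(n)ρ(n). For ψ : ℤ → ℂ define the operators (Aψ)(n) := h(n)ψ(n+1)/μ(n) + φ(n)ψ(n), (A†ψ)(n) := h(n−1)η(n−1)ρ(n−1)ψ(n−1)/(ρ(n)μ(n))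 + φ(n)η(n)ψ(n), (A'ψ)(n) := h'(n)ψ(n+1)/μ(n) + φ'(n)ψ(n), and (A'†ψ)(n) := h'(n−1)η'(n−1)ρ'(n−1)ψ(n−1)/(ρ'(n)μ(n)) + φ'(n)η'(n)ψ(n). Then the identity (A(A†ψ))(n) = a·(A'†(A'ψ))(n) + b·ψ(n), for all ψ : ℤ → ℂ and all n ∈ ℤ, holds if and only if the following two relations hold for all n ∈ ℤ: (i) h'(n)·φ'(n) = (1/a)·h(n)·φ(n+1)/g(n+1); and (ii) a·g(n)·( B(n)·h'(n−1)²/(μ(n)·μ(n−1)) − (1/a)·φ(n)²·η(n)/g(n) ) + b = B(n+1)·h(n)²/(μ(n+1)·μ(n)) − (1/a)·(φ(n+1)²·η(n+1)/g(n+1))·(h(n)²/h'(n)²). -/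
/-- The first-order Δ-difference operator `A = I(h/μ·S + φ)`:
`(Aψ)(n) = h(n)ψ(n+1)/μ(n) + φ(n)ψ(n)`. -/
noncomputable def opA (μ h φ : ℤ → ℝ) (ψ : ℤ → ℂ) (n : ℤ) : ℂ :=
  ((h n : ℝ) : ℂ) * ψ (n + 1) / ((μ n : ℝ) : ℂ) + ((φ n : ℝ) : ℂ) * ψ n

/-- The formal adjoint of `opA μ h φ` from the weighted `ℓ²` space with weight `ρ·μ` to
the one with weight `η·ρ·μ`:
`(A†ψ)(n) = h(n-1)η(n-1)ρ(n-1)ψ(n-1)/(ρ(n)μ(n)) + φ(n)η(n)ψ(n)`. -/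
noncomputable def opAdag (μ ρ η h φ : ℤ → ℝ) (ψ : ℤ → ℂ) (n : ℤ) : ℂ :=
  ((h (n - 1) * η (n - 1) * ρ (n - 1) : ℝ) : ℂ) * ψ (n - 1) / ((ρ n * μ n : ℝ) : ℂ) +
    ((φ n * η n : ℝ) : ℂ) * ψ n

/-!
Both sides of the intertwining relation are three-term difference operators
`ψ ↦ p·ψ(·+1) + q·ψ + r·ψ(·-1)`, and testing on Kronecker deltas shows that such an operator
determines its coefficients. Using `η' = (η g)∘σ`, the coefficients of `ψ(n+1)` and `ψ(n-1)`
agree iff (i) holds at `n` and at `n-1` respectively; given (i), the Pearson relation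
`η ρ = (B ρ)∘σ` turns the agreement of the diagonal coefficients into (ii).
-/

noncomputable def tridiag (p q r : ℤ → ℝ) (ψ : ℤ → ℂ) (n : ℤ) : ℂ :=
  (p n : ℂ) * ψ (n + 1) + (q n : ℂ) * ψ n + (r n : ℂ) * ψ (n - 1)

section Tridiag

variable (p q r : ℤ → ℝ) (n : ℤ)

lemma tridiag_single_add_one : tridiag p q r (Pi.single (n + 1) 1) n = p n := by
  simp [tridiag, show n - 1 ≠ n + 1 by omega]

lemma tridiag_single_self : tridiag p q r (Pi.single n 1) n = q n := by
  simp [tridiag]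

lemma tridiag_single_sub_one : tridiag p q r (Pi.single (n - 1) 1) n = r n := by
  simp [tridiag, show n + 1 ≠ n - 1 by omega]

lemma smul_tridiag_add_smul (a b : ℝ) (ψ : ℤ → ℂ) :
    (a : ℂ) * tridiag p q r ψ n + (b : ℂ) * ψ n =
      tridiag (fun m => a * p m) (fun m => a * q m + b) (fun m => a * r m) ψ n := by
  simp only [tridiag]; push_cast; ring

end Tridiag

theorem tridiag_eq_tridiag_iff {p q r p' q' r' : ℤ → ℝ} :
    (∀ ψ n, tridiag p q r ψ n = tridiag p' q' r' ψ n) ↔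
      ∀ n, p n = p' n ∧ q n = q' n ∧ r n = r' n := by
  refine ⟨fun H n => ?_, fun H ψ n => ?_⟩
  · have hp := H (Pi.single (n + 1) 1) n
    have hq := H (Pi.single n 1) n
    have hr := H (Pi.single (n - 1) 1) n
    simp only [tridiag_single_add_one, tridiag_single_self, tridiag_single_sub_one,
      Complex.ofReal_inj] at hp hq hr
    exact ⟨hp, hq, hr⟩
  · obtain ⟨hp, hq, hr⟩ := H n
    simp only [tridiag, hp, hq, hr]

section Composites

variable (μ ρ η h φ : ℤ → ℝ) (ψ : ℤ → ℂ) (n : ℤ)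

lemma opA_opAdag :
    opA μ h φ (opAdag μ ρ η h φ ψ) n =
      tridiag (fun m => h m * φ (m + 1) * η (m + 1) / μ m)
        (fun m => h m ^ 2 * η m * ρ m / (ρ (m + 1) * μ (m + 1) * μ m) + φ m ^ 2 * η m)
        (fun m => φ m * h (m - 1) * η (m - 1) * ρ (m - 1) / (ρ m * μ m)) ψ n := by
  simp only [opA, opAdag, tridiag, add_sub_cancel_right]; push_cast; ring

lemma opAdag_opA :
    opAdag μ ρ η h φ (opA μ h φ ψ) n =
      tridiag (fun m => φ m * η m * h m / μ m)
        (fun m => h (m - 1) ^ 2 * η (m - 1) * ρ (m - 1) / (ρ m * μ m * μ (m - 1)) + φ m ^ 2 * η m)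
        (fun m => h (m - 1) * η (m - 1) * ρ (m - 1) * φ (m - 1) / (ρ m * μ m)) ψ n := by
  simp only [opA, opAdag, tridiag, sub_add_cancel]; push_cast; ring

end Composites

section Coefficients

variable {μ ρ η η' B g h h' φ φ' : ℤ → ℝ} {a b : ℝ} {n : ℤ}

lemma intertwining_coeff_add_one_iff (ha : a ≠ 0) (hμ : μ n ≠ 0) (hη : η (n + 1) ≠ 0)
    (hg : g (n + 1) ≠ 0) (hη' : η' n = η (n + 1) * g (n + 1)) :
    h n * φ (n + 1) * η (n + 1) / μ n = a * (φ' n * η' n * h' n / μ n) ↔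
      h' n * φ' n = 1 / a * (h n * φ (n + 1) / g (n + 1)) := by
  rw [hη']
  constructor <;> intro H <;> field_simp at H ⊢ <;> linarith

lemma intertwining_coeff_sub_one_iff (ha : a ≠ 0) (hμ : μ n ≠ 0) (hρ : ρ n ≠ 0) (hη : η n ≠ 0)
    (hg : g n ≠ 0) (hη_pred : η (n - 1) ≠ 0) (hρ_pred : ρ (n - 1) ≠ 0)
    (hη' : η' (n - 1) = η n * g n) :
    φ n * h (n - 1) * η (n - 1) * ρ (n - 1) / (ρ n * μ n) =
        a * (h' (n - 1) * η' (n - 1) * (η (n - 1) * ρ (n - 1)) * φ' (n - 1) / (η n * ρ n * μ n)) ↔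
      h' (n - 1) * φ' (n - 1) = 1 / a * (h (n - 1) * φ n / g n) := by
  rw [hη']
  constructor <;> intro H <;> field_simp at H ⊢ <;> linarith

lemma intertwining_coeff_self_iff (ha : a ≠ 0) (hρ : ρ n ≠ 0) (hρ_succ : ρ (n + 1) ≠ 0)
    (hη : η n ≠ 0) (hg : g n ≠ 0) (hg_succ : g (n + 1) ≠ 0) (hh' : h' n ≠ 0)
    (hB : η n * ρ n = B (n + 1) * ρ (n + 1)) (hB_pred : η (n - 1) * ρ (n - 1) = B n * ρ n)
    (hη' : η' n = η (n + 1) * g (n + 1)) (hη'_pred : η' (n - 1) = η n * g n)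
    (hi : h' n * φ' n = 1 / a * (h n * φ (n + 1) / g (n + 1))) :
    h n ^ 2 * η n * ρ n / (ρ (n + 1) * μ (n + 1) * μ n) + φ n ^ 2 * η n =
        a * (h' (n - 1) ^ 2 * η' (n - 1) * (η (n - 1) * ρ (n - 1)) /
          (η n * ρ n * μ n * μ (n - 1)) + φ' n ^ 2 * η' n) + b ↔
      a * g n * (B n * h' (n - 1) ^ 2 / (μ n * μ (n - 1)) - 1 / a * (φ n ^ 2 * η n / g n)) + b =
        B (n + 1) * h n ^ 2 / (μ (n + 1) * μ n) -
          1 / a * (φ (n + 1) ^ 2 * η (n + 1) / g (n + 1)) * (h n ^ 2 / h' n ^ 2) := by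
  have hA : h n ^ 2 * η n * ρ n / (ρ (n + 1) * μ (n + 1) * μ n) =
      B (n + 1) * h n ^ 2 / (μ (n + 1) * μ n) := by
    rw [mul_assoc, hB]; field_simp
  have hA' : h' (n - 1) ^ 2 * η' (n - 1) * (η (n - 1) * ρ (n - 1)) /
      (η n * ρ n * μ n * μ (n - 1)) = g n * (B n * h' (n - 1) ^ 2 / (μ n * μ (n - 1))) := by
    rw [hη'_pred, hB_pred]; field_simp
  have hφ' : a * (φ' n ^ 2 * η' n) =
      1 / a * (φ (n + 1) ^ 2 * η (n + 1) / g (n + 1)) * (h n ^ 2 / h' n ^ 2) := by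
    have : φ' n = h' n * φ' n / h' n := by field_simp
    rw [this, hi, hη']; field_simp
  have hφ : φ n ^ 2 * η n = a * g n * (1 / a * (φ n ^ 2 * η n / g n)) := by field_simp
  constructor <;> intro H <;> linear_combination -H + hA - a * hA' - hφ' + hφ

end Coefficients

/-- The main Proposition of the paper in the discrete model `𝕋 = ℤ`: the intertwining
relation `A A† = a A'† A' + b` between two consecutive links of the factorization chain
is equivalent to the two structural relations (i) and (ii) on the coefficient
functions. -/
theorem statement_10
    (μ ρ η η' B g h h' φ φ' : ℤ → ℝ) (a b : ℝ) (ha : a ≠ 0)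
    (hμ : ∀ n, 0 < μ n) (hρ : ∀ n, 0 < ρ n) (hη : ∀ n, 0 < η n) (hg : ∀ n, 0 < g n)
    (hh' : ∀ n, h' n ≠ 0)
    (hpearson : ∀ n, η n * ρ n = B (n + 1) * ρ (n + 1))
    (hη' : ∀ n, η' n = η (n + 1) * g (n + 1)) :
    (∀ (ψ : ℤ → ℂ) (n : ℤ),
        opA μ h φ (opAdag μ ρ η h φ ψ) n =
          (a : ℂ) * opAdag μ (fun m => η m * ρ m) η' h' φ' (opA μ h' φ' ψ) n +
            (b : ℂ) * ψ n) ↔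
      (∀ n : ℤ,
        (h' n * φ' n = (1 / a) * (h n * φ (n + 1) / g (n + 1))) ∧
        (a * g n * (B n * (h' (n - 1)) ^ 2 / (μ n * μ (n - 1)) -
              (1 / a) * ((φ n) ^ 2 * η n / g n)) + b =
          B (n + 1) * (h n) ^ 2 / (μ (n + 1) * μ n) -
            (1 / a) * ((φ (n + 1)) ^ 2 * η (n + 1) / g (n + 1)) *
              ((h n) ^ 2 / (h' n) ^ 2))) := by
  have hμ n := (hμ n).ne'
  have hρ n := (hρ n).ne'
  have hη n := (hη n).ne'
  have hg n := (hg n).ne'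
  have hpearson_pred (n : ℤ) : η (n - 1) * ρ (n - 1) = B n * ρ n := by
    simpa using hpearson (n - 1)
  have hη'_pred (n : ℤ) : η' (n - 1) = η n * g n := by simpa using hη' (n - 1)
  simp only [opA_opAdag, opAdag_opA, smul_tridiag_add_smul, tridiag_eq_tridiag_iff]
  constructor
  · intro H n
    have hi := (intertwining_coeff_add_one_iff ha (hμ n) (hη _) (hg _) (hη' n)).1 (H n).1
    exact ⟨hi, (intertwining_coeff_self_iff ha (hρ n) (hρ _) (hη n) (hg n) (hg _) (hh' n)
      (hpearson n) (hpearson_pred n) (hη' n) (hη'_pred n) hi).1 (H n).2.1⟩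
  · intro H n
    obtain ⟨hi, hii⟩ := H n
    have hi_pred := (H (n - 1)).1
    rw [sub_add_cancel] at hi_pred
    exact ⟨(intertwining_coeff_add_one_iff ha (hμ n) (hη _) (hg _) (hη' n)).2 hi,
      (intertwining_coeff_self_iff ha (hρ n) (hρ _) (hη n) (hg n) (hg _) (hh' n)
        (hpearson n) (hpearson_pred n) (hη' n) (hη'_pred n) hi).2 hii,
      (intertwining_coeff_sub_one_iff ha (hμ n) (hρ n) (hη n) (hg n) (hη _) (hρ _)
        (hη'_pred n)).2 hi_pred⟩
end
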